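/- If ρ is a separable density matrix on H_A ⊗ H_B, then its partial transpose (1⊗T)(ρ) is positive semidefinite (the Peres-Horodecki criterion). -/

import Mathlib

open Matrix Kronecker
open scoped ComplexOrder

/-- Partial transposition of the second tensor factor, in the computational basis. -/
def ptranspose {nA nB : Type*} (ρ : Matrix (nA × nB) (nA × nB) ℂ) :
    Matrix (nA × nB) (nA × nB) ℂ :=
  fun p q => ρ (p.1, q.2) (q.1, p.2)

/-- A state on `H_A ⊗ H_B` is separable if it is a convex combination of projectors onto
product unit vectors. -/
def SepState {nA nB : Type*} [Fintype nA] [Fintype nB]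
    (ρ : Matrix (nA × nB) (nA × nB) ℂ) : Prop :=
  ∃ (k : ℕ) (p : Fin k → ℝ) (a : Fin k → nA → ℂ) (b : Fin k → nB → ℂ),
    (∀ i, 0 ≤ p i) ∧ (∑ i, p i = 1) ∧
    (∀ i, ∑ x, ‖a i x‖ ^ 2 = 1) ∧ (∀ i, ∑ x, ‖b i x‖ ^ 2 = 1) ∧
    ρ = ∑ i, (p i : ℂ) •
      (vecMulVec (a i) (star (a i)) ⊗ₖ vecMulVec (b i) (star (b i)))

lemma psd_vecMulVec {n : Type*} [Fintype n] (v : n → ℂ) :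
    (vecMulVec v (star v)).PosSemidef := by
  have h : vecMulVec v (star v) = replicateCol Unit v * (replicateCol Unit v)ᴴ := by
    rw [vecMulVec_eq (ι := Unit), conjTranspose_replicateCol]
  rw [h]
  exact Matrix.posSemidef_self_mul_conjTranspose _

lemma psd_smul {n : Type*} [Fintype n] {M : Matrix n n ℂ} (h : M.PosSemidef)
    {c : ℝ} (hc : 0 ≤ c) : ((c : ℂ) • M).PosSemidef := by
  constructor
  · unfold Matrix.IsHermitian
    rw [conjTranspose_smul, h.1]
    congr 1
    simp
  · intro x
    refine le_of_le_of_eq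
      (mul_nonneg (show (0 : ℂ) ≤ (c : ℂ) by exact_mod_cast hc) (h.2 x)) ?_
    simp only [Finsupp.sum, Finset.mul_sum, Matrix.smul_apply, smul_eq_mul]
    exact Finset.sum_congr rfl fun i _ => Finset.sum_congr rfl fun j _ => by ring

lemma psd_sum {n ι : Type*} [Fintype n] (s : Finset ι) (f : ι → Matrix n n ℂ)
    (h : ∀ i ∈ s, (f i).PosSemidef) : (∑ i ∈ s, f i).PosSemidef := by
  classical
  induction s using Finset.induction with
  | empty => simpa using Matrix.PosSemidef.zero
  | insert a s hni ih =>
    rw [Finset.sum_insert hni]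
    exact (h a (Finset.mem_insert_self a s)).add
      (ih fun i hi => h i (Finset.mem_insert_of_mem hi))

/-- Peres-Horodecki criterion: the partial transpose of a separable density matrix is
positive semidefinite. -/
theorem stmt1 {nA nB : Type*} [Fintype nA] [Fintype nB] [DecidableEq nA] [DecidableEq nB]
    (ρ : Matrix (nA × nB) (nA × nB) ℂ)
    (hρ : ρ.PosSemidef) (htr : ρ.trace = 1) (hsep : SepState ρ) :
    (ptranspose ρ).PosSemidef := by
  obtain ⟨k, p, a, b, hp, _, _, _, hrep⟩ := hsep
  have key : ptranspose ρ = ∑ i, (p i : ℂ) •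
      vecMulVec (fun q : nA × nB => a i q.1 * star (b i q.2))
        (star fun q : nA × nB => a i q.1 * star (b i q.2)) := by
    ext x y
    simp only [hrep, ptranspose, Matrix.sum_apply, Matrix.smul_apply,
      Matrix.kroneckerMap_apply, vecMulVec_apply, Pi.star_apply, smul_eq_mul]
    congr 1
    ext i
    simp only [star_mul', star_star]
    ring
  rw [key]
  exact psd_sum _ _ fun i _ => psd_smul (psd_vecMulVec _) (hp i)
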